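/- Let k ≥ 1 and let π = (π₁, π₂) be the 2-layer drawing of W_k obtained by placing V₁ = {(x,y) ∈ V(W_k) : y odd} and V₂ = V(W_k) ∖ V₁ on the two layers, each sorted lexicographically by key (y,x). Then every row edge of W_k crosses at most 1 non-row edge in π. -/
import Mathlib


/-- The vertices of the graph `W_k`: the `k` rows `{1, …, k} × {1, …, 4k(3k+6)}`
together with the hair vertices `(k+1, 4ky−2)` and `(k+2, 4ky−1)` for `y ∈ {1, …, 3k+6}`. -/
def WkVerts (k : ℕ) : Finset (ℕ × ℕ) :=
  (Finset.Icc 1 k ×ˢ Finset.Icc 1 (4 * k * (3 * k + 6))) ∪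
    (Finset.Icc 1 (3 * k + 6)).image (fun y => (k + 1, 4 * k * y - 2)) ∪
    (Finset.Icc 1 (3 * k + 6)).image (fun y => (k + 2, 4 * k * y - 1))

abbrev WkVert (k : ℕ) : Type := {p : ℕ × ℕ // p ∈ WkVerts k}

/-- The edge relation of `W_k`: row edges `{(x,y), (x,y+1)}` for `x ∈ {1, …, k}`, and,
for every `y ∈ {1, …, 3k+6}`, the non-row edges
`{(x, 4k(y−1)+4x−3), (x+1, 4k(y−1)+4x−2)}` for `x ∈ {1, …, k−1}` together with the hair
edges `{(k, 4ky−3), (k+1, 4ky−2)}` and `{(k+1, 4ky−2), (k+2, 4ky−1)}`. -/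
def WkRel (k : ℕ) (p q : ℕ × ℕ) : Prop :=
  (1 ≤ p.1 ∧ p.1 ≤ k ∧ q.1 = p.1 ∧ q.2 = p.2 + 1) ∨
  (∃ y, 1 ≤ y ∧ y ≤ 3 * k + 6 ∧
    ((∃ x, 1 ≤ x ∧ x ≤ k - 1 ∧ p = (x, 4 * k * (y - 1) + 4 * x - 3) ∧
        q = (x + 1, 4 * k * (y - 1) + 4 * x - 2)) ∨
      (p = (k, 4 * k * y - 3) ∧ q = (k + 1, 4 * k * y - 2)) ∨
      (p = (k + 1, 4 * k * y - 2) ∧ q = (k + 2, 4 * k * y - 1))))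

/-- The graph `W_k`. -/
def Wk (k : ℕ) : SimpleGraph (WkVert k) :=
  SimpleGraph.fromRel fun p q => WkRel k p.val q.val

/-- An edge of `W_k` is a row edge if its endpoints lie in the same row. -/
def IsRowEdgeW (k : ℕ) (e : Sym2 (WkVert k)) : Prop :=
  e ∈ (Wk k).edgeSet ∧ ∃ u v : WkVert k, e = s(u, v) ∧ u.val.1 = v.val.1

/-- An edge of `W_k` is a non-row edge if its endpoints lie in different rows. -/
def IsNonRowEdgeW (k : ℕ) (e : Sym2 (WkVert k)) : Prop :=
  e ∈ (Wk k).edgeSet ∧ ∃ u v : WkVert k, e = s(u, v) ∧ u.val.1 ≠ v.val.1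

/-- The vertices `(x, y)` of `W_k` with `y` odd. -/
def V1 (k : ℕ) : Finset (WkVert k) :=
  (WkVerts k).attach.filter fun p => p.val.2 % 2 = 1

/-- The vertices `(x, y)` of `W_k` with `y` even. -/
def V2 (k : ℕ) : Finset (WkVert k) :=
  (WkVerts k).attach.filter fun p => p.val.2 % 2 = 0

/-- A 2-layer drawing of a bipartite graph `G` with bipartition `(X, Y)`:
the vertices of `X` (resp. `Y`) are placed at positions `1, …, |X|` (resp. `1, …, |Y|`)
on two parallel lines, i.e. `pos` restricts to bijections `X → {1, …, |X|}` and
`Y → {1, …, |Y|}`. -/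
structure TwoLayerDrawing {V : Type*} (G : SimpleGraph V) (X Y : Finset V) where
  pos : V → ℕ
  cover : ∀ v : V, v ∈ X ∨ v ∈ Y
  disj : ∀ v : V, ¬(v ∈ X ∧ v ∈ Y)
  bipart : ∀ u v : V, G.Adj u v → ((u ∈ X ∧ v ∈ Y) ∨ (u ∈ Y ∧ v ∈ X))
  bijX : Set.BijOn pos ↑X (Set.Icc 1 X.card)
  bijY : Set.BijOn pos ↑Y (Set.Icc 1 Y.card)

/-- Two edges `{x₁, y₁}` and `{x₂, y₂}` with `x₁, x₂ ∈ X`, `y₁, y₂ ∈ Y` cross in the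
drawing iff one has its `X`-endpoint to the left of the other's but its `Y`-endpoint
to the right. -/
def TwoLayerDrawing.Crosses {V : Type*} {G : SimpleGraph V} {X Y : Finset V}
    (D : TwoLayerDrawing G X Y) (e₁ e₂ : Sym2 V) : Prop :=
  ∃ x₁ y₁ x₂ y₂ : V, x₁ ∈ X ∧ x₂ ∈ X ∧ y₁ ∈ Y ∧ y₂ ∈ Y ∧
    e₁ = s(x₁, y₁) ∧ e₂ = s(x₂, y₂) ∧
    ((D.pos x₁ < D.pos x₂ ∧ D.pos y₂ < D.pos y₁) ∨
      (D.pos x₂ < D.pos x₁ ∧ D.pos y₁ < D.pos y₂))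

/-- A 2-layer drawing is `k`-planar if every edge crosses at most `k` other edges. -/
def TwoLayerDrawing.IsKPlanar {V : Type*} {G : SimpleGraph V} {X Y : Finset V}
    (D : TwoLayerDrawing G X Y) (k : ℕ) : Prop :=
  ∀ e ∈ G.edgeSet, {e' | e' ∈ G.edgeSet ∧ D.Crosses e e'}.ncard ≤ k

/-- `G` is a 2-layer `k`-planar graph if it admits a 2-layer `k`-planar drawing with
respect to some bipartition. -/
def IsTwoLayerKPlanar {V : Type*} (G : SimpleGraph V) (k : ℕ) : Prop :=
  ∃ (X Y : Finset V) (D : TwoLayerDrawing G X Y), D.IsKPlanar k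

/-- The drawing `π = (π₁, π₂)` of `W_k` sorts each layer lexicographically by
the key `(y, x)`. -/
def LexSorted {k : ℕ} (D : TwoLayerDrawing (Wk k) (V1 k) (V2 k)) : Prop :=
  ∀ u v : WkVert k, ((u ∈ V1 k ∧ v ∈ V1 k) ∨ (u ∈ V2 k ∧ v ∈ V2 k)) →
    (D.pos u < D.pos v ↔ (u.val.2 < v.val.2 ∨ (u.val.2 = v.val.2 ∧ u.val.1 < v.val.1)))

section Aux

private lemma fact1 (k Y X : ℕ) : 4*k*(Y-1)+4*X = 4*(k*(Y-1)+X) := by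
  rw [Nat.mul_add, Nat.mul_assoc]

private lemma fact2 (k Y : ℕ) : 4*k*Y = 4*(k*Y) := Nat.mul_assoc 4 k Y

private lemma fact4 {k Y : ℕ} (hY : 1 ≤ Y) : k*(Y-1) + k = k*Y := by
  have h : Y - 1 + 1 = Y := by omega
  calc k*(Y-1) + k = k*((Y-1)+1) := by ring
    _ = k*Y := by rw [h]

private lemma duniq {k A B X X' : ℕ} (h : k*A + X = k*B + X')
    (hX : 1 ≤ X) (hX2 : X ≤ k) (hX' : 1 ≤ X') (hX2' : X' ≤ k) : X = X' := by
  rcases Nat.lt_trichotomy A B with h1 | h1 | h1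
  · have h2 : k*(A+1) ≤ k*B := Nat.mul_le_mul (le_refl k) h1
    have h3 : k*(A+1) = k*A + k := by ring
    omega
  · subst h1; omega
  · have h2 : k*(B+1) ≤ k*A := Nat.mul_le_mul (le_refl k) h1
    have h3 : k*(B+1) = k*B + k := by ring
    omega

private lemma mem_V1_iff {k : ℕ} {p : WkVert k} : p ∈ V1 k ↔ p.val.2 % 2 = 1 := by
  simp [V1]

private lemma mem_V2_iff {k : ℕ} {p : WkVert k} : p ∈ V2 k ↔ p.val.2 % 2 = 0 := by
  simp [V2]

private lemma sym2_match {k : ℕ} {a b c d : WkVert k}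
    (h : s(a, b) = s(c, d)) (ha : a ∈ V1 k) (hd : d ∈ V2 k) :
    a = c ∧ b = d := by
  rcases Sym2.eq_iff.mp h with ⟨h1, h2⟩ | ⟨h1, h2⟩
  · exact ⟨h1, h2⟩
  · exfalso
    have h3 := mem_V1_iff.mp ha
    have h4 := mem_V2_iff.mp hd
    rw [h1] at h3; omega

/-- Non-row edge data, oriented with the odd endpoint first. -/
private def NRo (k : ℕ) (a b : ℕ × ℕ) : Prop :=
  (∃ Y X, 1 ≤ Y ∧ Y ≤ 3*k+6 ∧ 1 ≤ X ∧ X ≤ k - 1 ∧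
    a = (X, 4*k*(Y-1)+4*X-3) ∧ b = (X+1, 4*k*(Y-1)+4*X-2)) ∨
  (∃ Y, 1 ≤ Y ∧ Y ≤ 3*k+6 ∧ a = (k, 4*k*Y-3) ∧ b = (k+1, 4*k*Y-2)) ∨
  (∃ Y, 1 ≤ Y ∧ Y ≤ 3*k+6 ∧ a = (k+2, 4*k*Y-1) ∧ b = (k+1, 4*k*Y-2))

private lemma rel_row {k : ℕ} {pv qv : ℕ × ℕ} (h : WkRel k pv qv)
    (heq : pv.1 = qv.1) : qv.2 = pv.2 + 1 ∧ pv.1 ≤ k := by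
  rcases h with ⟨h1, h2, h3, h4⟩ |
    ⟨Y, hY1, hY2, ⟨X, hX1, hX2, hp, hq⟩ | ⟨hp, hq⟩ | ⟨hp, hq⟩⟩
  · exact ⟨h4, h2⟩
  · exfalso; rw [hp, hq] at heq; simp at heq
  · exfalso; rw [hp, hq] at heq; simp at heq
  · exfalso; rw [hp, hq] at heq; simp at heq

private lemma row_struct {k : ℕ} {u v : WkVert k} (hadj : (Wk k).Adj u v)
    (heq : u.val.1 = v.val.1) :
    (v.val.2 = u.val.2 + 1 ∨ u.val.2 = v.val.2 + 1) ∧ u.val.1 ≤ k := by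
  have hadj' := hadj
  simp only [Wk, SimpleGraph.fromRel_adj] at hadj'
  rcases hadj'.2 with h | h
  · have h2 := rel_row h heq
    exact ⟨Or.inl h2.1, h2.2⟩
  · have h2 := rel_row h heq.symm
    exact ⟨Or.inr h2.1, by rw [heq]; exact h2.2⟩

private lemma rel_nonrow {k : ℕ} (hk : 1 ≤ k) {pv qv : ℕ × ℕ}
    (h : WkRel k pv qv) (hne : pv.1 ≠ qv.1) :
    (NRo k pv qv ∧ pv.2 % 2 = 1 ∧ qv.2 % 2 = 0) ∨
    (NRo k qv pv ∧ qv.2 % 2 = 1 ∧ pv.2 % 2 = 0) := by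
  rcases h with ⟨h1, h2, h3, h4⟩ |
    ⟨Y, hY1, hY2, ⟨X, hX1, hX2, hp, hq⟩ | ⟨hp, hq⟩ | ⟨hp, hq⟩⟩
  · exact absurd h3 (Ne.symm hne)
  · left
    refine ⟨Or.inl ⟨Y, X, hY1, hY2, hX1, hX2, hp, hq⟩, ?_, ?_⟩
    · rw [hp]
      show (4*k*(Y-1)+4*X-3) % 2 = 1
      have h1 := fact1 k Y X
      omega
    · rw [hq]
      show (4*k*(Y-1)+4*X-2) % 2 = 0
      have h1 := fact1 k Y X
      omega
  · left
    refine ⟨Or.inr (Or.inl ⟨Y, hY1, hY2, hp, hq⟩), ?_, ?_⟩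
    · rw [hp]
      show (4*k*Y-3) % 2 = 1
      have h1 := fact2 k Y
      have h2 : 0 < k*Y := Nat.mul_pos hk hY1
      omega
    · rw [hq]
      show (4*k*Y-2) % 2 = 0
      have h1 := fact2 k Y
      have h2 : 0 < k*Y := Nat.mul_pos hk hY1
      omega
  · right
    refine ⟨Or.inr (Or.inr ⟨Y, hY1, hY2, hq, hp⟩), ?_, ?_⟩
    · rw [hq]
      show (4*k*Y-1) % 2 = 1
      have h1 := fact2 k Y
      have h2 : 0 < k*Y := Nat.mul_pos hk hY1
      omega
    · rw [hp]
      show (4*k*Y-2) % 2 = 0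
      have h1 := fact2 k Y
      have h2 : 0 < k*Y := Nat.mul_pos hk hY1
      omega

private lemma nonrow_struct {k : ℕ} (hk : 1 ≤ k) {e : Sym2 (WkVert k)}
    (h : IsNonRowEdgeW k e) :
    ∃ p q : WkVert k, e = s(p, q) ∧ p ∈ V1 k ∧ q ∈ V2 k ∧ NRo k p.val q.val := by
  obtain ⟨hE, u, v, heq, huv⟩ := h
  subst heq
  have hadj : (Wk k).Adj u v := ((Wk k).mem_edgeSet).mp hE
  simp only [Wk, SimpleGraph.fromRel_adj] at hadj
  rcases hadj.2 with h | h
  · rcases rel_nonrow hk h huv with ⟨hN, h1, h2⟩ | ⟨hN, h1, h2⟩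
    · exact ⟨u, v, rfl, mem_V1_iff.mpr h1, mem_V2_iff.mpr h2, hN⟩
    · exact ⟨v, u, Sym2.eq_swap.symm, mem_V1_iff.mpr h1, mem_V2_iff.mpr h2, hN⟩
  · rcases rel_nonrow hk h huv.symm with ⟨hN, h1, h2⟩ | ⟨hN, h1, h2⟩
    · exact ⟨v, u, Sym2.eq_swap.symm, mem_V1_iff.mpr h1, mem_V2_iff.mpr h2, hN⟩
    · exact ⟨u, v, rfl, mem_V1_iff.mpr h1, mem_V2_iff.mpr h2, hN⟩

private lemma NRo_inj {k : ℕ} (hk : 1 ≤ k) {a₁ b₁ a₂ b₂ : ℕ × ℕ}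
    (h₁ : NRo k a₁ b₁) (h₂ : NRo k a₂ b₂) (ht : a₁.2 = a₂.2) :
    a₁ = a₂ ∧ b₁ = b₂ := by
  rcases h₁ with ⟨Y₁, X₁, hY11, hY12, hX11, hX12, ha₁, hb₁⟩ |
      ⟨Y₁, hY11, hY12, ha₁, hb₁⟩ | ⟨Y₁, hY11, hY12, ha₁, hb₁⟩ <;>
    rcases h₂ with ⟨Y₂, X₂, hY21, hY22, hX21, hX22, ha₂, hb₂⟩ |
      ⟨Y₂, hY21, hY22, ha₂, hb₂⟩ | ⟨Y₂, hY21, hY22, ha₂, hb₂⟩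
  -- AA
  · have ht' : 4*k*(Y₁-1)+4*X₁-3 = 4*k*(Y₂-1)+4*X₂-3 := by
      rw [ha₁, ha₂] at ht; exact ht
    have h11 := fact1 k Y₁ X₁
    have h21 := fact1 k Y₂ X₂
    have h12 := Nat.le_add_left X₁ (k*(Y₁-1))
    have h22 := Nat.le_add_left X₂ (k*(Y₂-1))
    have hMM : k*(Y₁-1)+X₁ = k*(Y₂-1)+X₂ := by omega
    have hXX : X₁ = X₂ := duniq hMM hX11 (by omega) hX21 (by omega)
    rw [ha₁, ha₂, hb₁, hb₂]
    simp only [Prod.mk.injEq, true_and, and_true]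
    omega
  -- AB
  · exfalso
    have ht' : 4*k*(Y₁-1)+4*X₁-3 = 4*k*Y₂-3 := by rw [ha₁, ha₂] at ht; exact ht
    have h11 := fact1 k Y₁ X₁
    have h21 := fact2 k Y₂
    have h12 := Nat.le_add_left X₁ (k*(Y₁-1))
    have h22 : 0 < k*Y₂ := Nat.mul_pos hk hY21
    have h23 := fact4 (k := k) hY21
    have hMM : k*(Y₁-1)+X₁ = k*(Y₂-1) + k := by omega
    have hXX : X₁ = k := duniq hMM hX11 (by omega) hk (le_refl k)
    omega
  -- AC
  · exfalso
    have ht' : 4*k*(Y₁-1)+4*X₁-3 = 4*k*Y₂-1 := by rw [ha₁, ha₂] at ht; exact ht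
    have h11 := fact1 k Y₁ X₁
    have h21 := fact2 k Y₂
    have h12 := Nat.le_add_left X₁ (k*(Y₁-1))
    have h22 : 0 < k*Y₂ := Nat.mul_pos hk hY21
    omega
  -- BA
  · exfalso
    have ht' : 4*k*Y₁-3 = 4*k*(Y₂-1)+4*X₂-3 := by rw [ha₁, ha₂] at ht; exact ht
    have h11 := fact2 k Y₁
    have h21 := fact1 k Y₂ X₂
    have h22 := Nat.le_add_left X₂ (k*(Y₂-1))
    have h12 : 0 < k*Y₁ := Nat.mul_pos hk hY11
    have h13 := fact4 (k := k) hY11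
    have hMM : k*(Y₂-1)+X₂ = k*(Y₁-1) + k := by omega
    have hXX : X₂ = k := duniq hMM hX21 (by omega) hk (le_refl k)
    omega
  -- BB
  · have ht' : 4*k*Y₁-3 = 4*k*Y₂-3 := by rw [ha₁, ha₂] at ht; exact ht
    have h11 := fact2 k Y₁
    have h21 := fact2 k Y₂
    have h12 : 0 < k*Y₁ := Nat.mul_pos hk hY11
    have h22 : 0 < k*Y₂ := Nat.mul_pos hk hY21
    rw [ha₁, ha₂, hb₁, hb₂]
    simp only [Prod.mk.injEq, true_and, and_true]
    omega
  -- BC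
  · exfalso
    have ht' : 4*k*Y₁-3 = 4*k*Y₂-1 := by rw [ha₁, ha₂] at ht; exact ht
    have h11 := fact2 k Y₁
    have h21 := fact2 k Y₂
    have h12 : 0 < k*Y₁ := Nat.mul_pos hk hY11
    have h22 : 0 < k*Y₂ := Nat.mul_pos hk hY21
    omega
  -- CA
  · exfalso
    have ht' : 4*k*Y₁-1 = 4*k*(Y₂-1)+4*X₂-3 := by rw [ha₁, ha₂] at ht; exact ht
    have h11 := fact2 k Y₁
    have h21 := fact1 k Y₂ X₂
    have h22 := Nat.le_add_left X₂ (k*(Y₂-1))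
    have h12 : 0 < k*Y₁ := Nat.mul_pos hk hY11
    omega
  -- CB
  · exfalso
    have ht' : 4*k*Y₁-1 = 4*k*Y₂-3 := by rw [ha₁, ha₂] at ht; exact ht
    have h11 := fact2 k Y₁
    have h21 := fact2 k Y₂
    have h12 : 0 < k*Y₁ := Nat.mul_pos hk hY11
    have h22 : 0 < k*Y₂ := Nat.mul_pos hk hY21
    omega
  -- CC
  · have ht' : 4*k*Y₁-1 = 4*k*Y₂-1 := by rw [ha₁, ha₂] at ht; exact ht
    have h11 := fact2 k Y₁
    have h21 := fact2 k Y₂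
    have h12 : 0 < k*Y₁ := Nat.mul_pos hk hY11
    have h22 : 0 < k*Y₂ := Nat.mul_pos hk hY21
    rw [ha₁, ha₂, hb₁, hb₂]
    simp only [Prod.mk.injEq, true_and, and_true]
    omega

private lemma cross_shape {k : ℕ} (hk : 1 ≤ k) {x₁ y₁ p q : WkVert k}
    (hx₁V : x₁ ∈ V1 k) (hy₁V : y₁ ∈ V2 k) (hpV : p ∈ V1 k) (hqV : q ∈ V2 k)
    (hr : x₁.val.1 = y₁.val.1) (hrk : x₁.val.1 ≤ k)
    (hor : y₁.val.2 = x₁.val.2 + 1 ∨ x₁.val.2 = y₁.val.2 + 1)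
    (hNR : NRo k p.val q.val)
    (hc : ((x₁.val.2 < p.val.2 ∨ (x₁.val.2 = p.val.2 ∧ x₁.val.1 < p.val.1)) ∧
        (q.val.2 < y₁.val.2 ∨ (q.val.2 = y₁.val.2 ∧ q.val.1 < y₁.val.1))) ∨
      ((p.val.2 < x₁.val.2 ∨ (p.val.2 = x₁.val.2 ∧ p.val.1 < x₁.val.1)) ∧
        (y₁.val.2 < q.val.2 ∨ (y₁.val.2 = q.val.2 ∧ y₁.val.1 < q.val.1)))) :
    (y₁.val.2 = x₁.val.2 + 1 ∧ p.val.1 = k+2 ∧ p.val.2 = x₁.val.2 ∧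
      q.val.1 = k+1 ∧ q.val.2 + 1 = x₁.val.2) ∨
    (x₁.val.2 = y₁.val.2 + 1 ∧ (p.val.2 + 1 = y₁.val.2 ∨ p.val.2 = y₁.val.2 + 1) ∧
      4 ∣ p.val.2 + 3) := by
  have hx₁p := mem_V1_iff.mp hx₁V
  have hy₁p := mem_V2_iff.mp hy₁V
  rcases hNR with ⟨Y, X, hY1, hY2, hX1, hX2, hp, hq⟩ |
      ⟨Y, hY1, hY2, hp, hq⟩ | ⟨Y, hY1, hY2, hp, hq⟩
  · have hp1 : p.val.1 = X := by rw [hp]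
    have hp2 : p.val.2 = 4*k*(Y-1)+4*X-3 := by rw [hp]
    have hq1 : q.val.1 = X+1 := by rw [hq]
    have hq2 : q.val.2 = 4*k*(Y-1)+4*X-2 := by rw [hq]
    have h1 := fact1 k Y X
    have h2 := Nat.le_add_left X (k*(Y-1))
    omega
  · have hp1 : p.val.1 = k := by rw [hp]
    have hp2 : p.val.2 = 4*k*Y-3 := by rw [hp]
    have hq1 : q.val.1 = k+1 := by rw [hq]
    have hq2 : q.val.2 = 4*k*Y-2 := by rw [hq]
    have h1 := fact2 k Y
    have h2 : 0 < k*Y := Nat.mul_pos hk hY1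
    omega
  · have hp1 : p.val.1 = k+2 := by rw [hp]
    have hp2 : p.val.2 = 4*k*Y-1 := by rw [hp]
    have hq1 : q.val.1 = k+1 := by rw [hq]
    have hq2 : q.val.2 = 4*k*Y-2 := by rw [hq]
    have h1 := fact2 k Y
    have h2 : 0 < k*Y := Nat.mul_pos hk hY1
    omega

end Aux

theorem stmt14 (k : ℕ) (hk : 1 ≤ k)
    (D : TwoLayerDrawing (Wk k) (V1 k) (V2 k)) (hD : LexSorted D) :
    ∀ e, IsRowEdgeW k e → {e' | IsNonRowEdgeW k e' ∧ D.Crosses e e'}.ncard ≤ 1 := by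
  intro e he
  obtain ⟨heE, u, v, heq, huv⟩ := he
  have hadj : (Wk k).Adj u v := by
    rw [heq] at heE; exact ((Wk k).mem_edgeSet).mp heE
  obtain ⟨x₁, y₁, hex, hx₁V, hy₁V, hr, hadj'⟩ :
      ∃ x₁ y₁ : WkVert k, e = s(x₁, y₁) ∧ x₁ ∈ V1 k ∧ y₁ ∈ V2 k ∧
        x₁.val.1 = y₁.val.1 ∧ (Wk k).Adj x₁ y₁ := by
    rcases D.bipart u v hadj with ⟨h1, h2⟩ | ⟨h1, h2⟩
    · exact ⟨u, v, heq, h1, h2, huv, hadj⟩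
    · exact ⟨v, u, heq.trans Sym2.eq_swap, h2, h1, huv.symm, hadj.symm⟩
  obtain ⟨hor, hrk⟩ := row_struct hadj' hr
  have key : ∀ e', IsNonRowEdgeW k e' → D.Crosses e e' →
      ∃ p q : WkVert k, e' = s(p, q) ∧ NRo k p.val q.val ∧
        ((y₁.val.2 = x₁.val.2 + 1 ∧ p.val.1 = k+2 ∧ p.val.2 = x₁.val.2 ∧
          q.val.1 = k+1 ∧ q.val.2 + 1 = x₁.val.2) ∨
        (x₁.val.2 = y₁.val.2 + 1 ∧ (p.val.2 + 1 = y₁.val.2 ∨ p.val.2 = y₁.val.2 + 1) ∧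
          4 ∣ p.val.2 + 3)) := by
    intro e' hNR' hcr
    obtain ⟨p, q, he', hpV, hqV, hNR⟩ := nonrow_struct hk hNR'
    obtain ⟨a₁, b₁, a₂, b₂, ha₁V, ha₂V, hb₁V, hb₂V, hee, hee', hpos⟩ := hcr
    obtain ⟨hax, hby⟩ := sym2_match (hex.symm.trans hee) hx₁V hb₁V
    obtain ⟨hpa, hqb⟩ := sym2_match (he'.symm.trans hee') hpV hb₂V
    subst hax; subst hby; subst hpa; subst hqb
    rw [hD x₁ p (Or.inl ⟨hx₁V, hpV⟩), hD q y₁ (Or.inr ⟨hqV, hy₁V⟩),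
      hD p x₁ (Or.inl ⟨hpV, hx₁V⟩), hD y₁ q (Or.inr ⟨hy₁V, hqV⟩)] at hpos
    exact ⟨p, q, he', hNR, cross_shape hk hx₁V hy₁V hpV hqV hr hrk hor hNR hpos⟩
  have hsub : Set.Subsingleton {e' | IsNonRowEdgeW k e' ∧ D.Crosses e e'} := by
    intro e₁ h₁ e₂ h₂
    obtain ⟨p₁, q₁, he₁, hN₁, hS₁⟩ := key e₁ h₁.1 h₁.2
    obtain ⟨p₂, q₂, he₂, hN₂, hS₂⟩ := key e₂ h₂.1 h₂.2
    have hpq : p₁.val = p₂.val ∧ q₁.val = q₂.val := by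
      rcases hS₁ with ⟨hA1, hB1, hC1, hD1, hE1⟩ | ⟨hA1, hB1, hC1⟩ <;>
        rcases hS₂ with ⟨hA2, hB2, hC2, hD2, hE2⟩ | ⟨hA2, hB2, hC2⟩
      · exact ⟨Prod.ext (by omega) (by omega), Prod.ext (by omega) (by omega)⟩
      · exfalso; omega
      · exfalso; omega
      · exact NRo_inj hk hN₁ hN₂ (by omega)
    rw [he₁, he₂, Subtype.ext hpq.1, Subtype.ext hpq.2]
  rcases hsub.eq_empty_or_singleton with h | ⟨a, h⟩ <;> rw [h] <;> simp
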